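/- Let α be a unital partial action of a group G on a commutative ring T and let δ^n : C^n(G,α,T) → C^{n+1}(G,α,T) be the partial coboundary homomorphism. Then for every f ∈ C^n(G,α,T) and all g_1,…,g_{n+2} ∈ G one has (δ^{n+1}(δ^n f))(g_1,…,g_{n+2}) = 1_{g_1}·1_{g_1 g_2}⋯1_{g_1⋯g_{n+2}}, i.e. the composite of two consecutive coboundary maps is trivial. -/

import Mathlib

/-- A unital partial action of a group `G` on a commutative ring `T` (ideals generated by
idempotents `e g`, partial ring isomorphisms `act g : D_{g⁻¹} → D_g`). -/
structure UnitalPartialAction (G : Type*) (T : Type*) [Group G] [CommRing T] where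
  e : G → T
  idem : ∀ g, IsIdempotentElem (e g)
  e_one : e 1 = 1
  act : G → T → T
  act_one : ∀ t, act 1 t = t
  act_add : ∀ g x y, act g (x + y) = act g x + act g y
  act_mul : ∀ g x y, act g (x * y) = act g x * act g y
  act_proj : ∀ g x, act g x = act g (x * e g⁻¹)
  act_e : ∀ g, act g (e g⁻¹) = e g
  mem_range : ∀ g x, act g x * e g = act g x
  act_range : ∀ g h, act g (e g⁻¹ * e h) = e g * e (g * h)
  act_inj : ∀ g x y, x * e g⁻¹ = x → y * e g⁻¹ = y → act g x = act g y → x = y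
  act_surj : ∀ g y, y * e g = y → ∃ x, x * e g⁻¹ = x ∧ act g x = y
  act_comp : ∀ g h x, x * (e h⁻¹ * e (g * h)⁻¹) = x → act g (act h x) = act (g * h) x

variable {G T : Type*} [Group G] [CommRing T]

/-- The idempotent `1_{g₁}·1_{g₁g₂}⋯1_{g₁⋯g_n}`. -/
def cochainUnit (pa : UnitalPartialAction G T) (n : ℕ) (gs : Fin n → G) : T :=
  ∏ i : Fin n, pa.e (((List.ofFn gs).take (i + 1)).prod)

/-- An `n`-cochain `f : Gⁿ → T`: `f gs` is invertible in the ideal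
`T·1_{g₁}·1_{g₁g₂}⋯1_{g₁⋯g_n}`. -/
def IsCochain (pa : UnitalPartialAction G T) (n : ℕ) (f : (Fin n → G) → T) : Prop :=
  ∀ gs : Fin n → G, f gs * cochainUnit pa n gs = f gs ∧
    ∃ u : T, u * cochainUnit pa n gs = u ∧ f gs * u = cochainUnit pa n gs

/-- Merging the `i`-th and `(i+1)`-st entries (`0`-indexed) of `(g₁,…,g_{n+1})` into their
product, producing an `n`-tuple. -/
def merge {n : ℕ} (i : Fin n) (gs : Fin (n + 1) → G) : Fin n → G := fun j =>
  if (j : ℕ) < (i : ℕ) then gs j.castSucc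
  else if (j : ℕ) = (i : ℕ) then gs j.castSucc * gs j.succ
  else gs j.succ

/-- The partial coboundary `δⁿ f` of an `n`-cochain `f` with (pointwise, in-ideal) inverse
`finv`:
`(δⁿf)(g₁,…,g_{n+1}) = α_{g₁}(f(g₂,…,g_{n+1})1_{g₁⁻¹}) ·
  ∏_{i=1}^{n} f(g₁,…,g_i g_{i+1},…,g_{n+1})^{(-1)^i} · f(g₁,…,g_n)^{(-1)^{n+1}}`,
inverses being taken in the corresponding ideals (so odd-indexed factors use `finv`). -/
def coboundary (pa : UnitalPartialAction G T) (n : ℕ)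
    (f finv : (Fin n → G) → T) : (Fin (n + 1) → G) → T := fun gs =>
  pa.act (gs 0) (f (Fin.tail gs) * pa.e (gs 0)⁻¹) *
    (∏ i : Fin n, (if (i : ℕ) % 2 = 0 then finv else f) (merge i gs)) *
    (if n % 2 = 0 then finv else f) (Fin.init gs)


/-!
Expanding `(δ^{n+1}(δⁿ f))(g)` gives a double product whose `(k, l)` factor is the `l`-th factor
of the `k`-th factor. The simplicial identity `d_k d_{l+1} = d_l d_k` (`k ≤ l`) matches the
factor `(k, l)` with `(l + 1, k)`: the two are `f` and its inverse evaluated at the same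
`n`-tuple, so their product is the unit of that tuple, transported by `α_{g₁}` when `k = 0`.
The pair `(0, 0)` yields exactly `1_{g₁}⋯1_{g₁⋯g_{n+2}}` (via `α_{g₁}α_{g₂} = α_{g₁g₂}` on the
right ideal), and every other pair's idempotent is absorbed by it, because the prefix products
of a face of `g` are prefix products of `g`.
-/

open Finset

lemma prod_mul_eq_of_forall_mul_eq {ι M : Type*} [CommMonoid M] (s : Finset ι) (x : ι → M)
    {a : M} (h : ∀ i ∈ s, x i * a = a) : (∏ i ∈ s, x i) * a = a :=
  prod_induction x (· * a = a) (fun y z hy hz => by rw [mul_assoc, hz, hy]) (one_mul a) h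

/-- `alternate k f finv` stands for `f ^ (-1) ^ k`. -/
def alternate {α : Type*} (k : ℕ) (a b : α) : α := if k % 2 = 0 then a else b

lemma alternate_apply {α β : Type*} (k : ℕ) (f g : α → β) (x : α) :
    alternate k f g x = alternate k (f x) (g x) := by
  unfold alternate; split_ifs <;> rfl

lemma alternate_alternate {α : Type*} (k l : ℕ) (a b : α) :
    alternate l (alternate k a b) (alternate k b a) = alternate (k + l) a b := by
  unfold alternate; split_ifs <;> first | rfl | omega

lemma alternate_mul_alternate_succ {M : Type*} [CommMagma M] (k : ℕ) (a b : M) :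
    alternate k a b * alternate (k + 1) a b = a * b := by
  unfold alternate; split_ifs <;> first | rfl | omega | exact mul_comm b a

lemma prod_range_prod_range_eq_prod_pairs {M : Type*} [CommMonoid M] (F : ℕ → ℕ → M) (m : ℕ) :
    ∏ k ∈ range (m + 1), ∏ l ∈ range m, F k l =
      ∏ l ∈ range m, ∏ k ∈ range (l + 1), F k l * F (l + 1) k := by
  induction m with
  | zero => simp
  | succ m ih =>
    have hcol : ∀ k, ∏ l ∈ range (m + 1), F k l = (∏ l ∈ range m, F k l) * F k m :=
      fun k => prod_range_succ _ _
    simp only [hcol]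
    rw [prod_mul_distrib, prod_range_succ (fun k => ∏ l ∈ range m, F k l), ih,
      prod_range_succ _ m, prod_mul_distrib (s := range (m + 1)),
      prod_range_succ (fun k => F k m), prod_range_succ (fun l => F (m + 1) l)]
    ac_rfl

def prefixProd {m : ℕ} (gs : Fin m → G) (j : ℕ) : G := ((List.ofFn gs).take j).prod

lemma prefixProd_zero {m : ℕ} (gs : Fin m → G) : prefixProd gs 0 = 1 := rfl

lemma prefixProd_succ {m : ℕ} (gs : Fin m → G) {j : ℕ} (hj : j < m) :
    prefixProd gs (j + 1) = prefixProd gs j * gs ⟨j, hj⟩ := by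
  rw [prefixProd, prefixProd, List.prod_take_succ _ _ (by simpa using hj), List.getElem_ofFn]

lemma prefixProd_one {m : ℕ} (gs : Fin (m + 1) → G) : prefixProd gs 1 = gs 0 := by
  rw [prefixProd_succ gs m.succ_pos, prefixProd_zero, one_mul]
  rfl

lemma mul_prefixProd_tail {m : ℕ} (gs : Fin (m + 1) → G) (j : ℕ) :
    gs 0 * prefixProd (Fin.tail gs) j = prefixProd gs (j + 1) := by
  simp only [prefixProd, List.ofFn_succ, List.take_succ_cons, List.prod_cons]
  rfl

/-- `face 0` drops `g₁`, `face k` for `1 ≤ k ≤ n` multiplies `g_k` and `g_{k+1}`, and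
`face k` for `k > n` drops `g_{n+1}`. -/
def face {n : ℕ} (k : ℕ) (gs : Fin (n + 1) → G) : Fin n → G := fun j =>
  if (j : ℕ) + 1 < k then gs j.castSucc
  else if (j : ℕ) + 1 = k then gs j.castSucc * gs j.succ
  else gs j.succ

lemma face_zero {n : ℕ} (gs : Fin (n + 1) → G) : face 0 gs = Fin.tail gs := by
  funext j
  simp [face, Fin.tail]

lemma face_succ {n : ℕ} (i : Fin n) (gs : Fin (n + 1) → G) : face (i + 1) gs = merge i gs := by
  funext j
  simp [face, merge]

lemma face_of_lt {n k : ℕ} (hk : n < k) (gs : Fin (n + 1) → G) : face k gs = Fin.init gs := by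
  funext j
  simp [face, Fin.init, show (j : ℕ) + 1 < k by omega]

lemma face_apply_zero {n k : ℕ} (hk : 2 ≤ k) (gs : Fin (n + 2) → G) : face k gs 0 = gs 0 := by
  simp [face, show 1 < k by omega]

lemma face_face {n k l : ℕ} (hkl : k ≤ l) (gs : Fin (n + 2) → G) :
    face k (face (l + 1) gs) = face l (face k gs) := by
  funext j
  simp only [face, Fin.val_castSucc, Fin.val_succ]
  split_ifs <;> first | omega | rfl | simp only [Fin.succ_castSucc, mul_assoc]

lemma prefixProd_face {m k : ℕ} (hk : 1 ≤ k) (gs : Fin (m + 1) → G) {j : ℕ} (hj : j ≤ m) :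
    prefixProd (face k gs) j = if j < k then prefixProd gs j else prefixProd gs (j + 1) := by
  induction j with
  | zero => simp [prefixProd_zero, show k ≠ 0 by omega]
  | succ j ih =>
    rw [prefixProd_succ _ (by omega), ih (by omega)]
    simp only [face]
    split_ifs <;> first
      | omega
      | simp only [prefixProd_succ gs (show j < m + 1 by omega),
          prefixProd_succ gs (show j + 1 < m + 1 by omega), mul_assoc]; rfl

namespace UnitalPartialAction

variable (pa : UnitalPartialAction G T)

lemma act_mul_e (g : G) (x y : T) :
    pa.act g (x * pa.e g⁻¹) * pa.act g (y * pa.e g⁻¹) = pa.act g (x * y * pa.e g⁻¹) := by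
  rw [← pa.act_mul, mul_mul_mul_comm, (pa.idem _).eq]

lemma act_prod_mul_e (g : G) (x : ℕ → T) (m : ℕ) :
    pa.act g ((∏ i ∈ range (m + 1), x i) * pa.e g⁻¹) =
      ∏ i ∈ range (m + 1), pa.act g (x i * pa.e g⁻¹) := by
  induction m with
  | zero => simp
  | succ m ih => rw [prod_range_succ x (m + 1), prod_range_succ _ (m + 1), ← ih, act_mul_e]

lemma act_act_e (a b : G) (x : T) :
    pa.act a (pa.act b (x * pa.e b⁻¹) * pa.e a⁻¹) =
      pa.act (a * b) (x * pa.e b⁻¹ * pa.e (a * b)⁻¹) := by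
  have hcut : pa.e b * pa.e a⁻¹ = pa.act b (pa.e b⁻¹ * pa.e (a * b)⁻¹) := by
    simpa [mul_inv_rev] using (pa.act_range b (b⁻¹ * a⁻¹)).symm
  have hx : pa.act b (x * pa.e b⁻¹) * pa.e a⁻¹ =
      pa.act b (x * pa.e b⁻¹ * pa.e (a * b)⁻¹) := by
    rw [← pa.mem_range, mul_assoc, hcut, ← pa.act_mul]
    congr 1
    linear_combination (x * pa.e (a * b)⁻¹) * (pa.idem b⁻¹).eq
  rw [hx, pa.act_comp]
  linear_combination (x * pa.e (a * b)⁻¹ * pa.e (a * b)⁻¹) * (pa.idem b⁻¹).eq +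
    (x * pa.e b⁻¹) * (pa.idem (a * b)⁻¹).eq

lemma act_prod_e {ι : Type*} (s : Finset ι) (g : G) (h : ι → G) :
    pa.act g ((∏ i ∈ s, pa.e (h i)) * pa.e g⁻¹) = pa.e g * ∏ i ∈ s, pa.e (g * h i) := by
  classical
  induction s using Finset.induction_on with
  | empty => simpa using pa.act_e g
  | insert a s ha ih =>
    have hsplit : (∏ i ∈ insert a s, pa.e (h i)) * pa.e g⁻¹ =
        (pa.e g⁻¹ * pa.e (h a)) * ((∏ i ∈ s, pa.e (h i)) * pa.e g⁻¹) := by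
      rw [prod_insert ha]
      linear_combination (pa.e (h a) * ∏ i ∈ s, pa.e (h i)) * (pa.idem g⁻¹).eq.symm
    rw [hsplit, pa.act_mul, pa.act_range, ih, prod_insert ha]
    linear_combination (pa.e (g * h a) * ∏ i ∈ s, pa.e (g * h i)) * (pa.idem g).eq

end UnitalPartialAction

section Coboundary

variable (pa : UnitalPartialAction G T)

lemma cochainUnit_eq_prod_prefixProd {m : ℕ} (gs : Fin m → G) :
    cochainUnit pa m gs = ∏ i : Fin m, pa.e (prefixProd gs (i + 1)) := rfl

lemma e_prefixProd_mul_cochainUnit {m j : ℕ} (gs : Fin m → G) (hj : 1 ≤ j) (hjm : j ≤ m) :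
    pa.e (prefixProd gs j) * cochainUnit pa m gs = cochainUnit pa m gs := by
  obtain ⟨i, rfl⟩ : ∃ i, j = i + 1 := ⟨j - 1, by omega⟩
  rw [cochainUnit_eq_prod_prefixProd,
    ← mul_prod_erase univ _ (mem_univ (⟨i, by omega⟩ : Fin m)), ← mul_assoc, (pa.idem _).eq]

lemma cochainUnit_face_mul_cochainUnit {m k : ℕ} (hk : 1 ≤ k) (gs : Fin (m + 1) → G) :
    cochainUnit pa m (face k gs) * cochainUnit pa (m + 1) gs = cochainUnit pa (m + 1) gs := by
  rw [cochainUnit_eq_prod_prefixProd]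
  refine prod_mul_eq_of_forall_mul_eq _ _ fun i _ => ?_
  rw [prefixProd_face hk gs i.isLt]
  split_ifs <;> exact e_prefixProd_mul_cochainUnit pa gs (by omega) (by omega)

lemma act_cochainUnit_tail {m : ℕ} (gs : Fin (m + 1) → G) :
    pa.act (gs 0) (cochainUnit pa m (Fin.tail gs) * pa.e (gs 0)⁻¹) =
      cochainUnit pa (m + 1) gs := by
  rw [cochainUnit_eq_prod_prefixProd, pa.act_prod_e, cochainUnit_eq_prod_prefixProd,
    Fin.prod_univ_succ]
  simp only [Fin.val_zero, zero_add, prefixProd_one, Fin.val_succ, mul_prefixProd_tail]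

variable {n : ℕ} (f finv : (Fin n → G) → T)

def coboundaryFactor (gs : Fin (n + 1) → G) (k : ℕ) : T :=
  if k = 0 then pa.act (gs 0) (f (face 0 gs) * pa.e (gs 0)⁻¹)
  else alternate k f finv (face k gs)

lemma coboundary_eq_prod (gs : Fin (n + 1) → G) :
    coboundary pa n f finv gs = ∏ k ∈ range (n + 2), coboundaryFactor pa f finv gs k := by
  have hparity : ∀ i : ℕ, (if i % 2 = 0 then finv else f) = alternate (i + 1) f finv := by
    intro i; unfold alternate; split_ifs <;> first | rfl | omega
  rw [prod_range_succ, prod_range_succ', ← Fin.prod_univ_eq_prod_range,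
    mul_comm _ (coboundaryFactor pa f finv gs 0), coboundary]
  congr 2
  · refine Fintype.prod_congr _ _ fun i => ?_
    rw [coboundaryFactor, if_neg i.val.succ_ne_zero, face_succ, hparity]
  · rw [coboundaryFactor, if_neg n.succ_ne_zero, face_of_lt n.lt_succ_self, hparity]

lemma alternate_coboundary (k : ℕ) :
    alternate k (coboundary pa n f finv) (coboundary pa n finv f) =
      coboundary pa n (alternate k f finv) (alternate k finv f) := by
  unfold alternate; split_ifs <;> rfl

def coboundarySqFactor (gs : Fin (n + 2) → G) (k l : ℕ) : T :=
  if k = 0 then pa.act (gs 0) (coboundaryFactor pa f finv (Fin.tail gs) l * pa.e (gs 0)⁻¹)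
  else coboundaryFactor pa (alternate k f finv) (alternate k finv f) (face k gs) l

lemma coboundary_coboundary_eq_prod (gs : Fin (n + 2) → G) :
    coboundary pa (n + 1) (coboundary pa n f finv) (coboundary pa n finv f) gs =
      ∏ k ∈ range (n + 3), ∏ l ∈ range (n + 2), coboundarySqFactor pa f finv gs k l := by
  rw [coboundary_eq_prod]
  refine prod_congr rfl fun k _ => ?_
  rcases Nat.eq_zero_or_pos k with rfl | hk
  · rw [coboundaryFactor, if_pos rfl, face_zero, coboundary_eq_prod, pa.act_prod_mul_e]
    rfl
  · rw [coboundaryFactor, if_neg hk.ne', alternate_coboundary, coboundary_eq_prod]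
    refine prod_congr rfl fun l _ => ?_
    rw [coboundarySqFactor, if_neg hk.ne']

variable {f finv}

lemma coboundarySqFactor_pair_of_ne_zero (hmul : ∀ x, f x * finv x = cochainUnit pa n x)
    (gs : Fin (n + 2) → G) {k l : ℕ} (hk : k ≠ 0) (hkl : k ≤ l) :
    coboundarySqFactor pa f finv gs k l * coboundarySqFactor pa f finv gs (l + 1) k =
      cochainUnit pa n (face l (face k gs)) := by
  have hF : ∀ {k l : ℕ}, k ≠ 0 → l ≠ 0 → coboundarySqFactor pa f finv gs k l =
      alternate (k + l) f finv (face l (face k gs)) := fun hk hl => by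
    rw [coboundarySqFactor, if_neg hk, coboundaryFactor, if_neg hl, alternate_alternate]
  rw [hF hk (by omega), hF (by omega) hk, face_face hkl, show l + 1 + k = k + l + 1 by omega,
    alternate_apply, alternate_apply, alternate_mul_alternate_succ, hmul]

lemma coboundarySqFactor_pair_zero (hmul : ∀ x, f x * finv x = cochainUnit pa n x)
    (gs : Fin (n + 2) → G) {l : ℕ} (hl : l ≠ 0) :
    coboundarySqFactor pa f finv gs 0 l * coboundarySqFactor pa f finv gs (l + 1) 0 =
      pa.act (gs 0) (cochainUnit pa n (face l (Fin.tail gs)) * pa.e (gs 0)⁻¹) := by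
  have h0 : face (l + 1) gs 0 = gs 0 := face_apply_zero (by omega) gs
  have hface : face 0 (face (l + 1) gs) = face l (Fin.tail gs) := by
    rw [face_face l.zero_le, face_zero]
  rw [coboundarySqFactor, if_pos rfl, coboundaryFactor, if_neg hl, coboundarySqFactor,
    if_neg l.succ_ne_zero, coboundaryFactor, if_pos rfl, h0, hface, pa.act_mul_e,
    alternate_apply, alternate_apply, alternate_mul_alternate_succ, hmul]

lemma coboundarySqFactor_pair_zero_zero (hmul : ∀ x, f x * finv x = cochainUnit pa n x)
    (gs : Fin (n + 2) → G) :
    coboundarySqFactor pa f finv gs 0 0 * coboundarySqFactor pa f finv gs 1 0 =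
      cochainUnit pa (n + 2) gs := by
  set b := Fin.tail gs 0
  set u := Fin.tail (Fin.tail gs)
  have h0 : face 1 gs 0 = gs 0 * b := rfl
  have hface : face 0 (face 1 gs) = u := by
    rw [face_face (le_refl 0), face_zero, face_zero]
  have hcancel : f u * pa.e b⁻¹ * alternate 1 f finv u = cochainUnit pa n u * pa.e b⁻¹ := by
    rw [← hmul]
    exact mul_right_comm _ _ _
  rw [coboundarySqFactor, if_pos rfl, coboundaryFactor, if_pos rfl, face_zero,
    coboundarySqFactor, if_neg one_ne_zero, coboundaryFactor, if_pos rfl, h0, hface,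
    pa.act_act_e, pa.act_mul_e, hcancel, ← pa.act_act_e, act_cochainUnit_tail,
    act_cochainUnit_tail]

lemma coboundarySqFactor_pair_mul_cochainUnit (hmul : ∀ x, f x * finv x = cochainUnit pa n x)
    (gs : Fin (n + 2) → G) {k l : ℕ} (hkl : k ≤ l + 1) :
    coboundarySqFactor pa f finv gs k (l + 1) * coboundarySqFactor pa f finv gs (l + 1 + 1) k *
      cochainUnit pa (n + 2) gs = cochainUnit pa (n + 2) gs := by
  rcases Nat.eq_zero_or_pos k with rfl | hk
  · rw [coboundarySqFactor_pair_zero pa hmul gs l.succ_ne_zero, ← act_cochainUnit_tail pa gs,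
      pa.act_mul_e, cochainUnit_face_mul_cochainUnit pa l.succ_pos]
  · have hface := cochainUnit_face_mul_cochainUnit pa hk gs
    rw [coboundarySqFactor_pair_of_ne_zero pa hmul gs hk.ne' hkl, ← hface, ← mul_assoc,
      cochainUnit_face_mul_cochainUnit pa l.succ_pos]

end Coboundary

theorem stmt5_general (pa : UnitalPartialAction G T) (n : ℕ) (f finv : (Fin n → G) → T)
    (hmul : ∀ gs, f gs * finv gs = cochainUnit pa n gs) :
    ∀ gs : Fin (n + 2) → G,
      coboundary pa (n + 1) (coboundary pa n f finv) (coboundary pa n finv f) gs =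
        cochainUnit pa (n + 2) gs := by
  intro gs
  rw [coboundary_coboundary_eq_prod, prod_range_prod_range_eq_prod_pairs, prod_range_succ',
    zero_add, prod_range_one, coboundarySqFactor_pair_zero_zero pa hmul]
  refine prod_mul_eq_of_forall_mul_eq _ _ fun l _ => ?_
  refine prod_mul_eq_of_forall_mul_eq _ _ fun k hk => ?_
  exact coboundarySqFactor_pair_mul_cochainUnit pa hmul gs (Nat.lt_succ_iff.mp (mem_range.mp hk))

/-- The composite of two consecutive partial coboundary homomorphisms is
trivial: for every `n`-cochain `f` (with inverse cochain `finv`),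
`(δ^{n+1}(δⁿ f))(g₁,…,g_{n+2}) = 1_{g₁}·1_{g₁g₂}⋯1_{g₁⋯g_{n+2}}`.
(The inverse of the `(n+1)`-cochain `δⁿ f` in `C^{n+1}(G,α,T)` is `δⁿ finv`.) -/
theorem stmt5 (pa : UnitalPartialAction G T) (n : ℕ) (f finv : (Fin n → G) → T)
    (hf : IsCochain pa n f) (hfinv : IsCochain pa n finv)
    (hmul : ∀ gs, f gs * finv gs = cochainUnit pa n gs) :
    ∀ gs : Fin (n + 2) → G,
      coboundary pa (n + 1) (coboundary pa n f finv) (coboundary pa n finv f) gs =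
        cochainUnit pa (n + 2) gs :=
  stmt5_general pa n f finv hmul
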